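/- arXiv:1605.01143 — 5 statements merged into one kernel-verified Lean document; each statement's English description precedes it below -/
import Mathlib

section
/- If f : S^1 → [0,1] is a measurable function and k is a nonzero integer, then its Fourier coefficient cₖ(f) = (1/2π)∫₀^{2π} f(t)e^{ikt} dt satisfies |cₖ(f)| ≤ √2/π. -/
open Real MeasureTheory intervalIntegral Complex

/-!
Multiplying `z = ∫₀^{2π} f(t) e^{ikt} dt` by `e^{iφ}` with `φ = -arg z` turns `‖z‖` into the
real integral `∫ f(t) cos(kt + φ) dt`. Since `0 ≤ f ≤ 1`, this is at most the integral of the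
positive part `(cos + |cos|)/2` of `cos(kt + φ)`, which over `|k|` full periods is
`(0 + 4)/2 = 2`. Hence `|cₖ| ≤ 1/π ≤ √2/π`.
-/

theorem periodic_abs_cos : Function.Periodic (fun x => |Real.cos x|) π := fun x => by
  simp [Real.cos_add_pi]

theorem integral_abs_cos_add_pi (φ : ℝ) : ∫ x in φ..φ + π, |Real.cos x| = 2 := by
  have hcos : Set.EqOn (fun x => |Real.cos x|) Real.cos (Set.uIcc (-(π / 2)) (π / 2)) :=
    fun x hx => by
      rw [Set.uIcc_of_le (by linarith [pi_pos])] at hx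
      exact abs_of_nonneg (cos_nonneg_of_mem_Icc hx)
  rw [periodic_abs_cos.intervalIntegral_add_eq φ (-(π / 2)), show -(π / 2) + π = π / 2 by ring,
    integral_congr hcos, integral_cos]
  norm_num

theorem integral_abs_cos_int_mul_add {k : ℤ} (hk : k ≠ 0) (φ : ℝ) :
    ∫ t in (0:ℝ)..2 * π, |Real.cos (k * t + φ)| = 4 := by
  have hk' : (k : ℝ) ≠ 0 := Int.cast_ne_zero.2 hk
  rw [integral_comp_mul_add (fun x => |Real.cos x|) hk', mul_zero, zero_add,
    show (k : ℝ) * (2 * π) + φ = φ + (2 * k : ℤ) • π by simp; ring,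
    periodic_abs_cos.intervalIntegral_add_zsmul_eq _ _
      (fun _ _ => Real.continuous_cos.abs.intervalIntegrable _ _),
    integral_abs_cos_add_pi, smul_eq_mul, zsmul_eq_mul]
  push_cast
  field_simp
  ring

theorem integral_cos_int_mul_add {k : ℤ} (hk : k ≠ 0) (φ : ℝ) :
    ∫ t in (0:ℝ)..2 * π, Real.cos (k * t + φ) = 0 := by
  rw [integral_comp_mul_add Real.cos (Int.cast_ne_zero.2 hk), integral_cos, mul_zero, zero_add,
    add_comm _ φ, Real.sin_add_int_mul_two_pi, sub_self, smul_zero]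

theorem integral_mul_le_of_mem_Icc {f g : ℝ → ℝ} {a b : ℝ} (hab : a ≤ b)
    (hf : IntervalIntegrable f volume a b) (hf01 : ∀ x ∈ Set.Icc a b, f x ∈ Set.Icc 0 1)
    (hg : Continuous g) :
    ∫ x in a..b, f x * g x ≤ ((∫ x in a..b, g x) + ∫ x in a..b, |g x|) / 2 := by
  have hgi : IntervalIntegrable g volume a b := hg.intervalIntegrable a b
  rw [← integral_add hgi hgi.abs, ← intervalIntegral.integral_div]
  refine integral_mono_on hab (hf.mul_continuousOn hg.continuousOn)
    ((hgi.add hgi.abs).div_const 2) fun x hx => ?_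
  obtain ⟨h0, h1⟩ := hf01 x hx
  rcases abs_cases (g x) with ⟨h, hg⟩ | ⟨h, hg⟩ <;> rw [h] <;> nlinarith

theorem re_exp_mul_integral_mul_exp {f : ℝ → ℝ} {a b : ℝ} (hf : IntervalIntegrable f volume a b)
    (k : ℤ) (φ : ℝ) :
    (exp (φ * I) * ∫ t in a..b, (f t : ℂ) * exp (I * k * t)).re =
      ∫ t in a..b, f t * Real.cos (k * t + φ) := by
  have hrot : ∀ t : ℝ, exp (φ * I) * ((f t : ℂ) * exp (I * k * t)) =
      f t * exp ((k * t + φ : ℝ) * I) := fun t => by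
    rw [mul_left_comm, ← Complex.exp_add]
    push_cast
    ring_nf
  have hint : IntervalIntegrable (fun t => (f t : ℂ) * exp ((k * t + φ : ℝ) * I)) volume a b :=
    IntervalIntegrable.mul_continuousOn ⟨hf.1.ofReal, hf.2.ofReal⟩ (by fun_prop)
  rw [← intervalIntegral.integral_const_mul, integral_congr fun t _ => hrot t,
    ← RCLike.re_to_complex, ← intervalIntegral_re hint]
  refine integral_congr fun t _ => ?_
  simp only [RCLike.re_to_complex, re_ofReal_mul, exp_ofReal_mul_I_re]

theorem norm_eq_re_exp_neg_arg_mul_I_mul (z : ℂ) : ‖z‖ = (exp (↑(-arg z) * I) * z).re := by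
  conv_rhs => rw [← norm_mul_exp_arg_mul_I z, mul_left_comm, ← Complex.exp_add]
  simp

theorem norm_integral_mul_exp_le {f : ℝ → ℝ} (hf : Measurable f) (hf01 : ∀ t, f t ∈ Set.Icc 0 1)
    {k : ℤ} (hk : k ≠ 0) :
    ‖∫ t in (0:ℝ)..2 * π, (f t : ℂ) * exp (I * k * t)‖ ≤ 2 := by
  set z := ∫ t in (0:ℝ)..2 * π, (f t : ℂ) * exp (I * k * t)
  have hfi : IntervalIntegrable f volume 0 (2 * π) :=
    intervalIntegrable_const.mono_fun' (g := fun _ => (1 : ℝ)) hf.aestronglyMeasurable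
      (.of_forall fun t => (norm_of_nonneg (hf01 t).1).trans_le (hf01 t).2)
  calc ‖z‖ = ∫ t in (0:ℝ)..2 * π, f t * Real.cos (k * t + -arg z) := by
        rw [norm_eq_re_exp_neg_arg_mul_I_mul]
        exact re_exp_mul_integral_mul_exp hfi k _
    _ ≤ ((∫ t in (0:ℝ)..2 * π, Real.cos (k * t + -arg z)) +
          ∫ t in (0:ℝ)..2 * π, |Real.cos (k * t + -arg z)|) / 2 :=
        integral_mul_le_of_mem_Icc two_pi_pos.le hfi (fun t _ => hf01 t) (by fun_prop)
    _ = 2 := by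
        rw [integral_cos_int_mul_add hk, integral_abs_cos_int_mul_add hk]
        norm_num

/-- The Fourier coefficients `cₖ`, `k ≠ 0`, of a fuzzy subset of the circle
are bounded in modulus by `√2/π`. -/
theorem fuzzy_fourier_coeff_le (f : ℝ → ℝ) (hf : Measurable f)
    (hrange : ∀ t, f t ∈ Set.Icc (0:ℝ) 1) (k : ℤ) (hk : k ≠ 0) :
    ‖(1/(2*π)) * ∫ t in (0:ℝ)..(2*π),
        (f t : ℂ) * Complex.exp (Complex.I * k * t)‖ ≤ Real.sqrt 2 / π := by
  calc _ ≤ 1 / (2 * π) * 2 := by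
        rw [norm_mul]
        gcongr
        · simp [abs_of_pos pi_pos]
        · exact norm_integral_mul_exp_le hf hrange hk
    _ ≤ √2 / π := by
        field_simp
        exact one_le_sqrt.2 one_le_two
end

section
/- For k ∈ ℕ*, the characteristic function of the set {t ∈ [0,2π) : cos(kt) > 0} has k-th cosine Fourier coefficient aₖ exactly equal to 2/π; hence the bound aₖ(f) ≤ 2/π for fuzzy subsets f of S^1 is sharp. -/
open Real MeasureTheory intervalIntegral


lemma cont_max : Continuous fun u : ℝ => max (Real.cos u) 0 :=
  Real.continuous_cos.max continuous_const

lemma key : ∫ u in (0:ℝ)..(2*π), max (Real.cos u) 0 = 2 := by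
  have hint : ∀ a b : ℝ, IntervalIntegrable (fun u => max (Real.cos u) 0) volume a b :=
    fun a b => cont_max.intervalIntegrable a b
  have h1 : ∫ u in (0:ℝ)..(π/2), max (Real.cos u) 0 = 1 := by
    rw [intervalIntegral.integral_congr (g := Real.cos) ?_, integral_cos]
    · simp
    · intro x hx
      rw [Set.uIcc_of_le (by positivity)] at hx
      exact max_eq_left (Real.cos_nonneg_of_mem_Icc ⟨by linarith [hx.1, pi_pos], hx.2⟩)
  have h2 : ∫ u in (π/2)..(3*π/2), max (Real.cos u) 0 = 0 := by
    rw [intervalIntegral.integral_congr (g := fun _ => (0:ℝ)) ?_]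
    · simp
    intro x hx
    rw [Set.uIcc_of_le (by linarith [pi_pos])] at hx
    exact max_eq_right (Real.cos_nonpos_of_pi_div_two_le_of_le hx.1 (by linarith [hx.2]))
  have h3 : ∫ u in (3*π/2)..(2*π), max (Real.cos u) 0 = 1 := by
    rw [intervalIntegral.integral_congr (g := Real.cos) ?_, integral_cos]
    · rw [show (3*π/2 : ℝ) = π/2 + π by ring, Real.sin_add_pi, Real.sin_pi_div_two]
      simp
    · intro x hx
      rw [Set.uIcc_of_le (by linarith [pi_pos])] at hx
      apply max_eq_left
      have : Real.cos x = Real.cos (x - 2*π) := by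
        rw [Real.cos_sub_two_pi]
      rw [this]
      exact Real.cos_nonneg_of_mem_Icc ⟨by linarith [hx.1], by linarith [hx.2, pi_pos]⟩
  have := intervalIntegral.integral_add_adjacent_intervals (hint 0 (π/2)) (hint (π/2) (3*π/2))
  have h4 := intervalIntegral.integral_add_adjacent_intervals (hint 0 (3*π/2)) (hint (3*π/2) (2*π))
  rw [← this, h1, h2] at h4
  rw [← h4, h3]; norm_num

/-- Sharpness of the bound `aₖ ≤ 2/π`: the characteristic function of
`{t : cos(kt) > 0}` has `k`-th cosine Fourier coefficient exactly `2/π`. -/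
theorem cosine_coeff_sharp (k : ℕ) (hk : 0 < k) :
    (1/π) * ∫ t in (0:ℝ)..(2*π),
        (Set.indicator {t : ℝ | 0 < Real.cos (k * t)} (fun _ => (1:ℝ)) t) *
          Real.cos (k * t) = 2/π := by
  have heq : ∀ t : ℝ,
      (Set.indicator {t : ℝ | 0 < Real.cos (k * t)} (fun _ => (1:ℝ)) t) * Real.cos (k * t)
        = max (Real.cos ((k:ℝ) * t)) 0 := by
    intro t
    rw [Set.indicator_apply]
    simp only [Set.mem_setOf_eq]
    by_cases h : 0 < Real.cos (k * t)
    · rw [if_pos h, one_mul, max_eq_left h.le]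
    · rw [if_neg h, zero_mul, max_eq_right (not_lt.1 h)]
  simp only [heq]
  have hk0 : (k:ℝ) ≠ 0 := Nat.cast_ne_zero.mpr hk.ne'
  rw [intervalIntegral.integral_comp_mul_left (fun u => max (Real.cos u) 0) hk0]
  have hper : Function.Periodic (fun u : ℝ => max (Real.cos u) 0) (2*π) := fun x => by
    simp [Real.cos_add_two_pi]
  have hint : ∀ a b : ℝ, IntervalIntegrable (fun u => max (Real.cos u) 0) volume a b :=
    fun a b => cont_max.intervalIntegrable a b
  have h2 : ∫ u in ((k:ℝ)*0)..((k:ℝ)*(2*π)), max (Real.cos u) 0 = (k:ℤ) • ∫ u in (0:ℝ)..(2*π), max (Real.cos u) 0 := by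
    have := hper.intervalIntegral_add_zsmul_eq (k:ℤ) 0 hint
    simpa [zsmul_eq_mul, mul_comm] using this
  rw [h2, key]
  simp only [zsmul_eq_mul, Int.cast_natCast, smul_eq_mul]
  field_simp
end

section
/- Let 0 = ξ₁ < η₁ < ⋯ < ξₙ < ηₙ < 2π and let χ be the characteristic function of ⋃ᵣ[ξᵣ,ηᵣ], with Hardy function h(χ)(z) = ∑_{k≥1} cₖ(χ) zᵏ on the open unit disk. Then for all |z| < 1, exp(−2πi · h(χ)(z)) = ∏_{r=1}^{n} (1 − z e^{iηᵣ})/(1 − z e^{iξᵣ}); in particular exp(−2πi·h(χ)) extends to a rational function whose poles lie on the unit circle at the points e^{−iξᵣ}. -/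
open Real Complex

/-!
Since `cₖ zᵏ = (2πi)⁻¹ ∑ᵣ ((z e^{iηᵣ})ᵏ − (z e^{iξᵣ})ᵏ) / k` and `∑_{k≥1} wᵏ / k = −log (1 − w)`
for `|w| < 1`, the Hardy function is `(2πi)⁻¹ ∑ᵣ (log (1 − z e^{iξᵣ}) − log (1 − z e^{iηᵣ}))`.
Multiplying by `−2πi` and exponentiating, the branch of the logarithm no longer matters and the
sum becomes the product of the quotients.
-/

theorem Complex.hasSum_pow_succ_div_neg_log {w : ℂ} (hw : ‖w‖ < 1) :
    HasSum (fun k : ℕ => w ^ (k + 1) / (k + 1)) (-log (1 - w)) := by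
  simpa using (hasSum_nat_add_iff' 1).mpr (hasSum_taylorSeries_neg_log hw)

theorem Complex.hasSum_sum_pow_succ_sub_div {ι : Type*} [Fintype ι] {a b : ι → ℂ}
    (ha : ∀ r, ‖a r‖ < 1) (hb : ∀ r, ‖b r‖ < 1) :
    HasSum (fun k : ℕ => ∑ r, (a r ^ (k + 1) - b r ^ (k + 1)) / (k + 1))
      (-∑ r, (log (1 - a r) - log (1 - b r))) := by
  rw [← Finset.sum_neg_distrib]
  refine hasSum_sum fun r _ => ?_
  simpa [sub_div, neg_add_eq_sub] using
    (hasSum_pow_succ_div_neg_log (ha r)).sub (hasSum_pow_succ_div_neg_log (hb r))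

theorem Complex.one_sub_ne_zero_of_norm_lt_one {w : ℂ} (hw : ‖w‖ < 1) : 1 - w ≠ 0 := by
  rintro h
  simp [← sub_eq_zero.mp h] at hw

theorem Complex.exp_sum_log_sub_log {ι : Type*} [Fintype ι] {a b : ι → ℂ}
    (ha : ∀ r, a r ≠ 0) (hb : ∀ r, b r ≠ 0) :
    exp (∑ r, (log (a r) - log (b r))) = ∏ r, a r / b r := by
  simp only [exp_sum, exp_sub, exp_log (ha _), exp_log (hb _)]

theorem Complex.norm_mul_exp_ofReal_mul_I {z : ℂ} (θ : ℝ) :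
    ‖z * exp (I * θ)‖ = ‖z‖ := by
  simp [norm_exp]

theorem coeff_succ_mul_pow_eq {ι : Type*} [Fintype ι] {ξ η : ι → ℝ} {c : ℕ → ℂ}
    (hc : ∀ k : ℕ, 0 < k → c k = (1 / (2 * π * k * I)) *
      ∑ r, (exp (I * k * η r) - exp (I * k * ξ r)))
    (z : ℂ) (k : ℕ) :
    c (k + 1) * z ^ (k + 1) = (2 * π * I)⁻¹ * ∑ r, ((z * exp (I * η r)) ^ (k + 1)
      - (z * exp (I * ξ r)) ^ (k + 1)) / (k + 1) := by
  have hexp : ∀ θ : ℝ, exp (I * ((k + 1 : ℕ) : ℂ) * θ) = exp (I * θ) ^ (k + 1) := by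
    intro θ
    rw [← Complex.exp_nat_mul]
    ring_nf
  rw [hc (k + 1) k.succ_pos]
  simp only [hexp, mul_pow, Finset.mul_sum, Finset.sum_mul]
  refine Finset.sum_congr rfl fun r _ => ?_
  push_cast
  field_simp

theorem crisp_exp_hardy_general (n : ℕ) (ξ η : Fin n → ℝ)
    (c : ℕ → ℂ)
    (hc : ∀ k : ℕ, 0 < k → c k = (1/(2*π*k*Complex.I)) *
      ∑ r : Fin n, (Complex.exp (Complex.I * k * η r) - Complex.exp (Complex.I * k * ξ r)))
    (hχ : ℂ → ℂ)
    (hHardy : ∀ z : ℂ, ‖z‖ < 1 → HasSum (fun k : ℕ => c (k+1) * z ^ (k+1)) (hχ z)) :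
    (∀ z : ℂ, ‖z‖ < 1 →
      Complex.exp (-(2*π*Complex.I) * hχ z) =
        ∏ r : Fin n, (1 - z * Complex.exp (Complex.I * η r)) /
          (1 - z * Complex.exp (Complex.I * ξ r))) ∧
    ∀ r : Fin n, ‖Complex.exp (-Complex.I * ξ r)‖ = 1 ∧
      1 - Complex.exp (-Complex.I * ξ r) * Complex.exp (Complex.I * ξ r) = 0 := by
  refine ⟨fun z hz => ?_, fun r => ⟨by simp [norm_exp], ?_⟩⟩
  · have hnorm : ∀ θ : ℝ, ‖z * exp (I * θ)‖ < 1 := fun θ => by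
      rwa [norm_mul_exp_ofReal_mul_I]
    have hlog := (hasSum_sum_pow_succ_sub_div (fun r => hnorm (η r))
      (fun r => hnorm (ξ r))).mul_left (2 * π * I)⁻¹
    simp only [← coeff_succ_mul_pow_eq hc] at hlog
    have h2πI : (2 * π * I : ℂ) ≠ 0 := by simp [pi_ne_zero]
    rw [(hHardy z hz).unique hlog, ← mul_assoc, neg_mul, mul_inv_cancel₀ h2πI, neg_one_mul, neg_neg,
      exp_sum_log_sub_log (fun r => one_sub_ne_zero_of_norm_lt_one (hnorm _))
        (fun r => one_sub_ne_zero_of_norm_lt_one (hnorm _))]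
  · rw [← Complex.exp_add, neg_mul, neg_add_cancel, Complex.exp_zero, sub_self]

/-- Exponentiating the Hardy function of a crisp subset of order `n` yields a
rational function: if `h(χ)(z) = ∑_{k≥1} cₖ(χ) zᵏ` on the open unit disk, then
`exp(−2πi·h(χ)(z)) = ∏ᵣ (1 − z e^{iηᵣ})/(1 − z e^{iξᵣ})`; in particular the
denominators vanish exactly on the unit circle, at the points `e^{−iξᵣ}`. -/
theorem crisp_exp_hardy (n : ℕ) (ξ η : Fin n → ℝ)
    (h0 : ∀ h : 0 < n, ξ ⟨0, h⟩ = 0)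
    (hlt : ∀ r : Fin n, ξ r < η r)
    (hchain : ∀ r : Fin n, ∀ h : r.val + 1 < n, η r < ξ ⟨r.val + 1, h⟩)
    (htop : ∀ r : Fin n, η r < 2*π)
    (c : ℕ → ℂ)
    (hc : ∀ k : ℕ, 0 < k → c k = (1/(2*π*k*Complex.I)) *
      ∑ r : Fin n, (Complex.exp (Complex.I * k * η r) - Complex.exp (Complex.I * k * ξ r)))
    (hχ : ℂ → ℂ)
    (hHardy : ∀ z : ℂ, ‖z‖ < 1 → HasSum (fun k : ℕ => c (k+1) * z ^ (k+1)) (hχ z)) :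
    (∀ z : ℂ, ‖z‖ < 1 →
      Complex.exp (-(2*π*Complex.I) * hχ z) =
        ∏ r : Fin n, (1 - z * Complex.exp (Complex.I * η r)) /
          (1 - z * Complex.exp (Complex.I * ξ r))) ∧
    ∀ r : Fin n, ‖Complex.exp (-Complex.I * ξ r)‖ = 1 ∧
      1 - Complex.exp (-Complex.I * ξ r) * Complex.exp (Complex.I * ξ r) = 0 :=
  crisp_exp_hardy_general n ξ η c hc hχ hHardy
end

section
/- Let (sₖ)_{k∈ℤ} be a hermitian sequence of complex numbers (s_{−k} = conj(sₖ)), let Tₖ be the (k+1)×(k+1) Toeplitz matrix with (i,j)-entry s_{j−i}, let Dₖ = det Tₖ, and let Wₖ be the k×k matrix obtained from Tₖ by deleting the first column and last row, with Fₖ = det Wₖ. Then for all k ≥ 2, D_{k−1}² − D_{k−2} Dₖ = |Fₖ|². -/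
open Matrix

/-!
The identity is the Desnanot–Jacobi (Dodgson condensation) identity for `T = T_k`: deleting the
first or last row together with the first or last column of `T` leaves `T_{k-1}` (twice), `W_k`,
and a matrix that is `W_kᴴ` because `s` is hermitian, while deleting the first and last rows and
columns leaves `T_{k-2}`. Desnanot–Jacobi is Jacobi's theorem on complementary minors of the
adjugate, proved by multiplying a matrix `M` by a block matrix built from `adj M` and cancelling
`det M` on the generic matrix.
-/

namespace Matrix

variable {R : Type*} [CommRing R]

section Jacobi

variable {m n : Type*} [Fintype m] [Fintype n] [DecidableEq m] [DecidableEq n]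

theorem det_mul_det_adjugate_toBlocks₁₁ (M : Matrix (m ⊕ n) (m ⊕ n) R) :
    M.det * M.adjugate.toBlocks₁₁.det = M.det ^ Fintype.card m * M.toBlocks₂₂.det := by
  obtain ⟨A, B, C, D, rfl⟩ : ∃ A B C D, M = fromBlocks A B C D :=
    ⟨_, _, _, _, (fromBlocks_toBlocks M).symm⟩
  set N := (fromBlocks A B C D).adjugate
  -- `M * adj M = det M • 1` makes `M * [[N₁₁, 0], [N₂₁, 1]]` block upper triangular.
  have hMN : fromBlocks A B C D * fromBlocks N.toBlocks₁₁ N.toBlocks₁₂ N.toBlocks₂₁ N.toBlocks₂₂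
      = (fromBlocks A B C D).det • 1 := by
    rw [fromBlocks_toBlocks, mul_adjugate]
  rw [fromBlocks_multiply, ← fromBlocks_one, fromBlocks_smul] at hMN
  obtain ⟨h₁₁, -, h₂₁, -⟩ := fromBlocks_inj.mp hMN
  have key : fromBlocks A B C D * fromBlocks N.toBlocks₁₁ 0 N.toBlocks₂₁ 1
      = fromBlocks ((fromBlocks A B C D).det • 1) B 0 D := by
    rw [fromBlocks_multiply, h₁₁, h₂₁, smul_zero]
    simp
  simpa [det_mul, det_fromBlocks_zero₁₂, det_fromBlocks_zero₂₁, det_smul] using congrArg det key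

theorem det_adjugate_toBlocks₁₁ [Nonempty m] (M : Matrix (m ⊕ n) (m ⊕ n) R) :
    M.adjugate.toBlocks₁₁.det = M.det ^ (Fintype.card m - 1) * M.toBlocks₂₂.det := by
  let X := mvPolynomialX (m ⊕ n) (m ⊕ n) ℤ
  suffices X.adjugate.toBlocks₁₁.det = X.det ^ (Fintype.card m - 1) * X.toBlocks₂₂.det by
    have hmap := congrArg (MvPolynomial.aeval fun p => M p.1 p.2) this
    rw [map_mul, map_pow, AlgHom.map_det, AlgHom.map_det, AlgHom.map_det] at hmap
    rwa [← mvPolynomialX_mapMatrix_aeval ℤ M, ← AlgHom.map_adjugate]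
  -- `det X` is a nonzerodivisor for the matrix `X` of indeterminates.
  apply mul_left_cancel₀ (det_mvPolynomialX_ne_zero (m ⊕ n) ℤ)
  rw [det_mul_det_adjugate_toBlocks₁₁, ← mul_assoc, ← pow_succ',
    Nat.sub_add_cancel Fintype.card_pos]

end Jacobi

noncomputable def finCornersSumInteriorEquiv (n : ℕ) : Fin 2 ⊕ Fin n ≃ Fin (n + 2) :=
  Equiv.ofBijective (Sum.elim ![0, Fin.last (n + 1)] fun j => j.succ.castSucc) <| by
    rw [Fintype.bijective_iff_injective_and_card]
    refine ⟨Function.Injective.sumElim ?_ ?_ ?_, by simp [add_comm]⟩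
    · intro a b h
      fin_cases a <;> fin_cases b <;> simp_all [Fin.ext_iff]
    · intro a b h
      simpa [Fin.ext_iff] using h
    · intro a b h
      fin_cases a <;> simp [Fin.ext_iff] at h
      omega

@[simp] lemma finCornersSumInteriorEquiv_inl_zero (n : ℕ) :
    finCornersSumInteriorEquiv n (Sum.inl 0) = 0 := rfl
@[simp] lemma finCornersSumInteriorEquiv_inl_one (n : ℕ) :
    finCornersSumInteriorEquiv n (Sum.inl 1) = Fin.last (n + 1) := rfl
@[simp] lemma finCornersSumInteriorEquiv_inr (n : ℕ) (j : Fin n) :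
    finCornersSumInteriorEquiv n (Sum.inr j) = j.succ.castSucc := rfl

theorem det_adjugate_corners {n : ℕ} (A : Matrix (Fin (n + 2)) (Fin (n + 2)) R) :
    (of fun i j : Fin 2 => A.adjugate (![0, Fin.last (n + 1)] i) (![0, Fin.last (n + 1)] j)).det
      = det (A.submatrix Fin.succ Fin.succ) * det (A.submatrix Fin.castSucc Fin.castSucc)
        - det (A.submatrix Fin.succ Fin.castSucc) * det (A.submatrix Fin.castSucc Fin.succ) := by
  have hsign : (-1 : R) ^ (n + 1) * (-1) ^ (n + 1) = 1 := by
    rw [← mul_pow, neg_one_mul, neg_neg, one_pow]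
  simp only [det_fin_two, of_apply, adjugate_fin_succ_eq_det_submatrix, cons_val_zero,
    cons_val_one, cons_val_fin_one, Fin.val_zero, Fin.val_last, Fin.succAbove_zero,
    Fin.succAbove_last, add_zero, zero_add, pow_zero, one_mul, Even.add_self, Even.neg_pow,
    one_pow, sub_right_inj]
  linear_combination (det (A.submatrix Fin.succ Fin.castSucc) *
    det (A.submatrix Fin.castSucc Fin.succ)) * hsign

theorem det_mul_det_submatrix_interior {n : ℕ} (A : Matrix (Fin (n + 2)) (Fin (n + 2)) R) :
    A.det * det (A.submatrix (fun i : Fin n => i.succ.castSucc) fun i => i.succ.castSucc)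
      = det (A.submatrix Fin.succ Fin.succ) * det (A.submatrix Fin.castSucc Fin.castSucc)
        - det (A.submatrix Fin.succ Fin.castSucc) * det (A.submatrix Fin.castSucc Fin.succ) := by
  have h := det_adjugate_toBlocks₁₁ (A.submatrix (finCornersSumInteriorEquiv n)
    (finCornersSumInteriorEquiv n))
  rw [adjugate_submatrix_equiv_self, det_submatrix_equiv_self, Fintype.card_fin, pow_one] at h
  rw [← det_adjugate_corners]
  exact h.symm

section Toeplitz

variable {α : Type*}

def toeplitz (s : ℤ → α) (n : ℕ) : Matrix (Fin n) (Fin n) α :=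
  of fun i j => s ((j : ℤ) - (i : ℤ))

@[simp] lemma toeplitz_apply (s : ℤ → α) {n : ℕ} (i j : Fin n) :
    toeplitz s n i j = s ((j : ℤ) - (i : ℤ)) := rfl

lemma toeplitz_submatrix_succ_succ (s : ℤ → α) (n : ℕ) :
    (toeplitz s (n + 1)).submatrix Fin.succ Fin.succ = toeplitz s n := by
  ext i j
  simp only [submatrix_apply, toeplitz_apply, Fin.val_succ]
  push_cast
  ring_nf

lemma toeplitz_submatrix_castSucc_castSucc (s : ℤ → α) (n : ℕ) :
    (toeplitz s (n + 1)).submatrix Fin.castSucc Fin.castSucc = toeplitz s n := by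
  ext i j
  simp

lemma toeplitz_submatrix_succ_castSucc (s : ℤ → α) (n : ℕ) :
    (toeplitz s (n + 1)).submatrix Fin.succ Fin.castSucc = toeplitz (fun m => s (m - 1)) n := by
  ext i j
  simp only [submatrix_apply, toeplitz_apply, Fin.val_succ, Fin.val_castSucc]
  push_cast
  ring_nf

lemma toeplitz_submatrix_castSucc_succ (s : ℤ → α) (n : ℕ) :
    (toeplitz s (n + 1)).submatrix Fin.castSucc Fin.succ = toeplitz (fun m => s (m + 1)) n := by
  ext i j
  simp only [submatrix_apply, toeplitz_apply, Fin.val_succ, Fin.val_castSucc]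
  push_cast
  ring_nf

lemma toeplitz_submatrix_interior (s : ℤ → α) (n : ℕ) :
    (toeplitz s (n + 2)).submatrix (fun i : Fin n => i.succ.castSucc) (fun i => i.succ.castSucc)
      = toeplitz s n := by
  ext i j
  simp only [submatrix_apply, toeplitz_apply, Fin.val_succ, Fin.val_castSucc]
  push_cast
  ring_nf

lemma conjTranspose_toeplitz [Star α] (s : ℤ → α) (n : ℕ) :
    (toeplitz s n)ᴴ = toeplitz (fun m => star (s (-m))) n := by
  ext i j
  simp

theorem det_toeplitz_mul_det_toeplitz (s : ℤ → R) (n : ℕ) :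
    det (toeplitz s (n + 2)) * det (toeplitz s n) = det (toeplitz s (n + 1)) ^ 2 -
      det (toeplitz (fun m => s (m - 1)) (n + 1)) *
        det (toeplitz (fun m => s (m + 1)) (n + 1)) := by
  have h := det_mul_det_submatrix_interior (toeplitz s (n + 2))
  rwa [toeplitz_submatrix_interior, toeplitz_submatrix_succ_succ,
    toeplitz_submatrix_castSucc_castSucc, toeplitz_submatrix_succ_castSucc,
    toeplitz_submatrix_castSucc_succ, ← sq] at h

end Toeplitz

end Matrix

/-- Jacobi-type identity for Toeplitz determinants of a hermitian sequence:
`D_{k−1}² − D_{k−2} Dₖ = |Fₖ|²`, where `Dₖ = det Tₖ` for the `(k+1)×(k+1)`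
Toeplitz matrix `Tₖ` with `(i,j)` entry `s_{j−i}`, and `Fₖ` is the determinant
of the matrix `Wₖ` obtained from `Tₖ` by deleting the first column and the
last row. -/
theorem toeplitz_det_identity (s : ℤ → ℂ)
    (hherm : ∀ k : ℤ, s (-k) = starRingEnd ℂ (s k))
    (D : ℕ → ℂ)
    (hD : ∀ k : ℕ, D k = Matrix.det (Matrix.of (fun i j : Fin (k+1) => s ((j:ℤ) - (i:ℤ)))))
    (F : ℕ → ℂ)
    (hF : ∀ k : ℕ, F k = Matrix.det (Matrix.of (fun i j : Fin k => s (((j:ℤ) + 1) - (i:ℤ)))))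
    (k : ℕ) (hk : 2 ≤ k) :
    (D (k-1))^2 - D (k-2) * D k = ((‖F k‖ : ℂ))^2 := by
  obtain ⟨n, rfl⟩ : ∃ n, k = n + 2 := ⟨k - 2, by omega⟩
  have hT (j : ℕ) : D j = det (toeplitz s (j + 1)) := hD j
  have hF' : F (n + 2) = det (toeplitz (fun m => s (m + 1)) (n + 2)) := by
    rw [hF]
    congr 1
    ext i j
    simp [sub_add_eq_add_sub]
  have hconj :
      toeplitz (fun m => s (m - 1)) (n + 2) = (toeplitz (fun m => s (m + 1)) (n + 2))ᴴ := by
    rw [conjTranspose_toeplitz]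
    congr 1
    funext m
    rw [← neg_sub, hherm, Complex.star_def, neg_add_eq_sub]
  have hJ := det_toeplitz_mul_det_toeplitz s (n + 1)
  rw [hconj, det_conjTranspose, ← hF', ← hT, ← hT, ← hT, Complex.star_def,
    Complex.conj_mul'] at hJ
  rw [show n + 2 - 1 = n + 1 by omega, Nat.add_sub_cancel]
  linear_combination -hJ
end

section
/- Let (sₖ) be a hermitian sequence whose Toeplitz determinants satisfy D₀ > 0, D₁ > 0, …, D_{n−1} > 0 and Dₙ = 0. Then the polynomial P(z) = det of the (n+1)×(n+1) matrix whose first row is (1, z, z², …, zⁿ) and whose subsequent rows are (s_{−j}, s_{−j+1}, …, s_{n−j}) for j = 0, …, n−1, has n roots α₁, …, αₙ that are all simple and of modulus 1. -/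
/-!
The cofactors of the first row of the matrix defining `P` form a vector in the kernel of the
singular hermitian matrix `Tₙ`, so `P` is the polynomial `p` with that coefficient vector, and
its leading coefficient is `±Dₙ₋₁ ≠ 0`. Read `Tₙ` as the hermitian form
`⟪f, g⟫ = ∑ conj fᵢ s_{j-i} gⱼ` on polynomials of degree `≤ n`: `p` lies in its radical, the form
is positive definite on polynomials of degree `< n` (Sylvester's criterion), and there it is
invariant under `f ↦ X f` (Toeplitz structure). If `p = (X - a) q`, then `⟪X q, p⟫ = ⟪p, q⟫ = 0`
gives `(1 - |a|²) ⟪q, q⟫ = 0`, so `|a| = 1`. If moreover `q = (X - a) r`, then `⟪p, X r⟫ = 0`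
and `|a| = 1` force `⟪q, q⟫ = 0`, which is impossible.
-/

open Matrix Polynomial Finset
open scoped ComplexOrder

namespace Matrix

variable {𝕜 : Type*} [RCLike 𝕜]

theorem PosDef.of_submatrix_castSucc_of_det_pos {N : ℕ}
    {M : Matrix (Fin (N + 2)) (Fin (N + 2)) 𝕜} (hM : M.IsHermitian)
    (hA : (M.submatrix Fin.castSucc Fin.castSucc).PosDef) (hdet : 0 < M.det) : M.PosDef := by
  set A := M.submatrix Fin.castSucc Fin.castSucc
  let M' : Matrix (Fin (N + 1) ⊕ Fin 1) (Fin (N + 1) ⊕ Fin 1) 𝕜 :=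
    M.submatrix finSumFinEquiv finSumFinEquiv
  have hblocks : M' = fromBlocks A M'.toBlocks₁₂ M'.toBlocks₁₂ᴴ M'.toBlocks₂₂ := by
    have h₂₁ : M'.toBlocks₂₁ = M'.toBlocks₁₂ᴴ := by
      ext i j; exact (hM.apply _ _).symm
    rw [← h₂₁]; exact (fromBlocks_toBlocks M').symm
  have := hA.isUnit.invertible
  set S := M'.toBlocks₂₂ - M'.toBlocks₁₂ᴴ * A⁻¹ * M'.toBlocks₁₂
  have hdetS : M.det = A.det * S.det := by
    rw [← det_submatrix_equiv_self (finSumFinEquiv : Fin (N + 1) ⊕ Fin 1 ≃ _)]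
    change M'.det = _
    rw [hblocks, det_fromBlocks₁₁, invOf_eq_nonsing_inv]
  have hS : S = diagonal fun _ => S.det := by
    ext i j; fin_cases i; fin_cases j; simp
  have hSpos : 0 < S.det := (pos_iff_pos_of_mul_pos (hdetS ▸ hdet)).mp hA.det_pos
  have hM'psd : M'.PosSemidef := by
    rw [hblocks, PosDef.fromBlocks₁₁ _ _ hA]
    change S.PosSemidef
    rw [hS, posSemidef_diagonal_iff]
    exact fun _ => hSpos.le
  exact ((posSemidef_submatrix_equiv finSumFinEquiv).mp hM'psd).posDef_iff_det_ne_zero.mpr hdet.ne'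

theorem posDef_of_det_submatrix_castLE_pos {N : ℕ}
    {M : Matrix (Fin (N + 1)) (Fin (N + 1)) 𝕜} (hM : M.IsHermitian)
    (hdet : ∀ k (hk : k ≤ N), 0 < (M.submatrix (Fin.castLE (Nat.succ_le_succ hk))
      (Fin.castLE (Nat.succ_le_succ hk))).det) : M.PosDef := by
  induction N with
  | zero =>
    have hM1 : M = diagonal fun _ => M.det := by
      ext i j; fin_cases i; fin_cases j; simp
    rw [hM1, posDef_diagonal_iff]
    exact fun _ => by simpa using hdet 0 le_rfl
  | succ N ih =>
    refine PosDef.of_submatrix_castSucc_of_det_pos hM (ih (hM.submatrix _) fun k hk => ?_)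
      (by simpa using hdet (N + 1) le_rfl)
    rw [submatrix_submatrix]
    exact hdet k (hk.trans N.le_succ)

variable {n α : Type*} [Fintype n] [DecidableEq n] [CommRing α]

theorem det_updateRow_eq_sum_mul_adjugate (A : Matrix n n α) (i : n) (v : n → α) :
    (A.updateRow i v).det = ∑ j, v j * A.adjugate j i := by
  rw [← cramer_transpose_apply, cramer_eq_adjugate_mulVec, ← adjugate_transpose]
  simp [mulVec, dotProduct, mul_comm]

theorem mulVec_adjugate_col_eq_zero {A : Matrix n n α} (hA : A.det = 0) (i : n) :
    A *ᵥ (fun j => A.adjugate j i) = 0 := by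
  funext k
  simpa [hA, mul_apply, mulVec, dotProduct] using congrFun₂ (mul_adjugate A) k i

end Matrix

theorem Polynomial.exists_injective_eval_eq_prod {K : Type*} [Field K] [IsAlgClosed K]
    {p : K[X]} {d : ℕ} (hp0 : p ≠ 0) (hd : p.natDegree = d)
    (hsq : ∀ a, ¬(X - C a) ^ 2 ∣ p) :
    ∃ α : Fin d → K, Function.Injective α ∧ (∀ r, p.IsRoot (α r)) ∧
      ∀ z, p.eval z = p.leadingCoeff * ∏ r, (z - α r) := by
  classical
  have hnd : p.roots.Nodup := Multiset.nodup_iff_count_le_one.mpr fun a => by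
    rw [count_roots]
    by_contra h
    exact hsq a ((le_rootMultiplicity_iff hp0).mp (by omega))
  have hcard : p.roots.toFinset.card = d := by
    rw [Multiset.toFinset_card_of_nodup hnd, ← (IsAlgClosed.splits p).natDegree_eq_card_roots,
      hd]
  let e := Finset.equivFinOfCardEq hcard
  refine ⟨fun r => e.symm r, Subtype.val_injective.comp e.symm.injective, fun r => ?_,
    fun z => ?_⟩
  · exact (mem_roots hp0).mp (Multiset.mem_toFinset.mp (e.symm r).2)
  · rw [(IsAlgClosed.splits p).eval_eq_prod_roots,
      e.symm.prod_comp (fun x : p.roots.toFinset => z - x), Finset.prod_coe_sort,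
      Finset.prod_eq_multiset_prod, Multiset.toFinset_val, hnd.dedup]

noncomputable def toeplitzMatrix (s : ℤ → ℂ) (N : ℕ) :
    Matrix (Fin (N + 1)) (Fin (N + 1)) ℂ :=
  of fun i j => s (j - i)

noncomputable def toeplitzForm (s : ℤ → ℂ) (N : ℕ) (f g : ℂ[X]) : ℂ :=
  ∑ i ∈ range (N + 1), ∑ j ∈ range (N + 1), star (f.coeff i) * s (j - i) * g.coeff j

namespace Toeplitz

variable {s : ℤ → ℂ} {N : ℕ} {p : ℂ[X]}

theorem isHermitian_toeplitzMatrix (hs : ∀ k, s (-k) = starRingEnd ℂ (s k)) :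
    (toeplitzMatrix s N).IsHermitian := by
  ext i j
  simp [toeplitzMatrix, ← hs]

theorem posDef_toeplitzMatrix (hs : ∀ k, s (-k) = starRingEnd ℂ (s k))
    (hpos : ∀ k ≤ N, 0 < (toeplitzMatrix s k).det.re) : (toeplitzMatrix s N).PosDef := by
  refine posDef_of_det_submatrix_castLE_pos (isHermitian_toeplitzMatrix hs) fun k hk => ?_
  have hreal : starRingEnd ℂ (toeplitzMatrix s k).det = (toeplitzMatrix s k).det := by
    rw [← Complex.star_def, ← det_conjTranspose, (isHermitian_toeplitzMatrix hs).eq]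
  exact Complex.pos_iff.mpr ⟨hpos k hk, (Complex.conj_eq_iff_im.mp hreal).symm⟩

theorem toeplitzForm_eq_dotProduct (f g : ℂ[X]) :
    toeplitzForm s N f g =
      star (toFn (N + 1) f) ⬝ᵥ (toeplitzMatrix s N *ᵥ toFn (N + 1) g) := by
  simp only [toeplitzForm, toeplitzMatrix, dotProduct, mulVec, mul_sum, mul_assoc]
  rw [← Fin.sum_univ_eq_sum_range]
  refine sum_congr rfl fun i _ => ?_
  rw [← Fin.sum_univ_eq_sum_range (fun j => star (f.coeff i) * (s (j - i) * g.coeff j))]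
  rfl

theorem toeplitzForm_X_mul_X (f g : ℂ[X]) :
    toeplitzForm s (N + 1) (X * f) (X * g) = toeplitzForm s N f g := by
  simp only [toeplitzForm, sum_range_succ' _ (N + 1), coeff_X_mul_zero, coeff_X_mul]
  simp only [star_zero, zero_mul, mul_zero, add_zero, sum_const_zero]
  push_cast
  simp only [add_sub_add_right_eq_sub]

theorem toeplitzForm_succ_of_coeff_eq_zero {f g : ℂ[X]} (hf : f.coeff (N + 1) = 0)
    (hg : g.coeff (N + 1) = 0) :
    toeplitzForm s (N + 1) f g = toeplitzForm s N f g := by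
  simp [toeplitzForm, sum_range_succ _ (N + 1), hf, hg]

theorem toeplitzForm_X_sub_C_mul_left (a : ℂ) (f g : ℂ[X]) :
    toeplitzForm s N ((X - C a) * f) g
      = toeplitzForm s N (X * f) g - starRingEnd ℂ a * toeplitzForm s N f g := by
  simp only [toeplitzForm, sub_mul, coeff_sub, coeff_C_mul, star_sub, star_mul', mul_sum,
    ← sum_sub_distrib]
  refine sum_congr rfl fun i _ => sum_congr rfl fun j _ => ?_
  simp only [RCLike.star_def, sub_right_inj]
  ring

theorem toeplitzForm_X_sub_C_mul_right (a : ℂ) (f g : ℂ[X]) :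
    toeplitzForm s N f ((X - C a) * g)
      = toeplitzForm s N f (X * g) - a * toeplitzForm s N f g := by
  simp only [toeplitzForm, sub_mul, coeff_sub, coeff_C_mul, mul_sum, ← sum_sub_distrib]
  refine sum_congr rfl fun i _ => sum_congr rfl fun j _ => ?_
  ring

theorem toeplitzForm_eq_zero_of_mulVec_eq_zero_right
    (hp : toeplitzMatrix s N *ᵥ toFn (N + 1) p = 0) (f : ℂ[X]) : toeplitzForm s N f p = 0 := by
  rw [toeplitzForm_eq_dotProduct, hp, dotProduct_zero]

theorem toeplitzForm_eq_zero_of_mulVec_eq_zero_left (hs : ∀ k, s (-k) = starRingEnd ℂ (s k))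
    (hp : toeplitzMatrix s N *ᵥ toFn (N + 1) p = 0) (g : ℂ[X]) :
    toeplitzForm s N p g = 0 := by
  rw [toeplitzForm_eq_dotProduct, dotProduct_mulVec, ← (isHermitian_toeplitzMatrix hs).eq,
    ← star_mulVec, hp, star_zero, zero_dotProduct]

theorem toeplitzForm_X_mul_X_of_natDegree_le {f g : ℂ[X]} (hf : f.natDegree ≤ N)
    (hg : g.natDegree ≤ N) :
    toeplitzForm s (N + 1) (X * f) (X * g) = toeplitzForm s (N + 1) f g := by
  rw [toeplitzForm_X_mul_X, toeplitzForm_succ_of_coeff_eq_zero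
    (coeff_eq_zero_of_natDegree_lt (by omega)) (coeff_eq_zero_of_natDegree_lt (by omega))]

theorem toeplitzForm_self_pos (hpd : (toeplitzMatrix s N).PosDef) {f : ℂ[X]} (hf0 : f ≠ 0)
    (hf : f.natDegree ≤ N) : 0 < toeplitzForm s N f f := by
  rw [toeplitzForm_eq_dotProduct]
  refine hpd.dotProduct_mulVec_pos fun h => hf0 ?_
  rw [← ofFn_comp_toFn_eq_id_of_natDegree_lt (Nat.lt_succ_of_le hf), h, map_zero]

theorem toeplitzForm_succ_self_pos (hpd : (toeplitzMatrix s N).PosDef) {f : ℂ[X]} (hf0 : f ≠ 0)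
    (hf : f.natDegree ≤ N) : 0 < toeplitzForm s (N + 1) f f := by
  rw [toeplitzForm_succ_of_coeff_eq_zero (coeff_eq_zero_of_natDegree_lt (by omega))
    (coeff_eq_zero_of_natDegree_lt (by omega))]
  exact toeplitzForm_self_pos hpd hf0 hf

theorem exists_mulVec_eq_zero_and_det_eq_eval (hzero : (toeplitzMatrix s (N + 1)).det = 0)
    (hdet : (toeplitzMatrix s N).det ≠ 0) :
    ∃ p : ℂ[X], p ≠ 0 ∧ p.natDegree ≤ N + 1 ∧
      toeplitzMatrix s (N + 1) *ᵥ toFn (N + 2) p = 0 ∧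
      ∀ z : ℂ, (of fun i j : Fin (N + 1 + 1) =>
        if i = 0 then z ^ (j : ℕ) else s ((j : ℤ) - ((i : ℤ) - 1))).det = p.eval z := by
  -- `T_{N+1}` with its last row moved to the top: the other rows are those of the matrix above.
  let A := (toeplitzMatrix s (N + 1)).submatrix (Equiv.subRight (1 : Fin (N + 2))) id
  let c : Fin (N + 2) → ℂ := fun j => A.adjugate j 0
  have hA : A.det = 0 := by rw [det_permute, hzero, mul_zero]
  have hc : c (Fin.last _) ≠ 0 := by
    have hminor : A.submatrix Fin.succ Fin.castSucc = toeplitzMatrix s N := by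
      ext i j
      simp [A, toeplitzMatrix, Fin.coe_sub_one, Fin.succ_ne_zero]
    simp only [c, adjugate_fin_succ_eq_det_submatrix, Fin.succAbove_zero, Fin.succAbove_last,
      hminor]
    exact mul_ne_zero (pow_ne_zero _ (neg_ne_zero.mpr one_ne_zero)) hdet
  refine ⟨ofFn (N + 2) c, ?_, Nat.lt_succ_iff.mp (ofFn_natDegree_lt (by omega) c), ?_,
    fun z => ?_⟩
  · intro h
    apply hc
    simpa [Fin.last] using congrArg (coeff · (N + 1)) h
  · rw [toFn_comp_ofFn_eq_id]
    funext i
    simpa [A, c, mulVec, dotProduct] using congrFun (mulVec_adjugate_col_eq_zero hA 0) (i + 1)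
  · have hrow : (of fun i j : Fin (N + 1 + 1) =>
        if i = 0 then z ^ (j : ℕ) else s ((j : ℤ) - ((i : ℤ) - 1))) =
        A.updateRow 0 fun j => z ^ (j : ℕ) := by
      ext i j
      by_cases hi : i = 0
      · simp [hi]
      · simp only [of_apply, hi, ↓reduceIte, toeplitzMatrix, ne_eq, not_false_eq_true,
          updateRow_ne, submatrix_apply, Equiv.subRight_apply, id_eq, Fin.coe_sub_one, A]
        have : (i : ℕ) ≠ 0 := Fin.val_ne_zero_iff.mpr hi
        congr 1
        omega
    rw [hrow, det_updateRow_eq_sum_mul_adjugate, ofFn_eq_sum_monomial, eval_finsetSum]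
    simp [c, mul_comm]

theorem natDegree_eq_of_mulVec_eq_zero (hpd : (toeplitzMatrix s N).PosDef)
    (hp : toeplitzMatrix s (N + 1) *ᵥ toFn (N + 2) p = 0) (hp0 : p ≠ 0)
    (hdeg : p.natDegree ≤ N + 1) : p.natDegree = N + 1 := by
  by_contra hne
  have hpos := toeplitzForm_succ_self_pos hpd hp0 (by omega)
  rw [toeplitzForm_eq_zero_of_mulVec_eq_zero_right hp] at hpos
  exact hpos.false

theorem norm_eq_one_of_isRoot (hs : ∀ k, s (-k) = starRingEnd ℂ (s k))
    (hpd : (toeplitzMatrix s N).PosDef) (hp : toeplitzMatrix s (N + 1) *ᵥ toFn (N + 2) p = 0)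
    (hp0 : p ≠ 0) (hdeg : p.natDegree ≤ N + 1) {a : ℂ} (ha : p.IsRoot a) : ‖a‖ = 1 := by
  obtain ⟨q, rfl⟩ := dvd_iff_isRoot.mpr ha
  have hq0 : q ≠ 0 := right_ne_zero_of_mul hp0
  have hq : q.natDegree ≤ N := by
    rw [natDegree_mul (X_sub_C_ne_zero a) hq0, natDegree_X_sub_C] at hdeg; omega
  have h₁ := toeplitzForm_eq_zero_of_mulVec_eq_zero_right hp (X * q)
  rw [toeplitzForm_X_sub_C_mul_right, toeplitzForm_X_mul_X_of_natDegree_le hq hq] at h₁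
  have h₂ := toeplitzForm_eq_zero_of_mulVec_eq_zero_left hs hp q
  rw [toeplitzForm_X_sub_C_mul_left] at h₂
  have hpos := (toeplitzForm_succ_self_pos hpd hq0 hq).ne'
  have key : (a * starRingEnd ℂ a - 1) * toeplitzForm s (N + 1) q q = 0 := by
    linear_combination (-1 : ℂ) * h₁ - a * h₂
  rw [mul_eq_zero, sub_eq_zero, Complex.mul_conj, Complex.normSq_eq_norm_sq] at key
  have : ‖a‖ ^ 2 = 1 := by exact_mod_cast key.resolve_right hpos
  exact (pow_eq_one_iff_of_nonneg (norm_nonneg a) two_ne_zero).mp this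

theorem not_sq_dvd_of_mulVec_eq_zero (hs : ∀ k, s (-k) = starRingEnd ℂ (s k))
    (hpd : (toeplitzMatrix s N).PosDef) (hp : toeplitzMatrix s (N + 1) *ᵥ toFn (N + 2) p = 0)
    (hp0 : p ≠ 0) (hdeg : p.natDegree ≤ N + 1) (a : ℂ) : ¬(X - C a) ^ 2 ∣ p := by
  rintro ⟨r, rfl⟩
  have ha : a * starRingEnd ℂ a = 1 := by
    rw [Complex.mul_conj, Complex.normSq_eq_norm_sq,
      norm_eq_one_of_isRoot hs hpd hp hp0 hdeg (by simp)]
    norm_num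
  rw [pow_two, mul_assoc] at hp hp0 hdeg
  set q := (X - C a) * r
  have hq0 : q ≠ 0 := right_ne_zero_of_mul hp0
  have hq : q.natDegree ≤ N := by
    rw [natDegree_mul (X_sub_C_ne_zero a) hq0, natDegree_X_sub_C] at hdeg; omega
  have hr : r.natDegree ≤ N := by
    rw [natDegree_mul (X_sub_C_ne_zero a) (right_ne_zero_of_mul hq0), natDegree_X_sub_C] at hq
    omega
  have h := toeplitzForm_eq_zero_of_mulVec_eq_zero_left hs hp (X * r)
  rw [toeplitzForm_X_sub_C_mul_left, toeplitzForm_X_mul_X_of_natDegree_le hq hr,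
    toeplitzForm_X_sub_C_mul_left, toeplitzForm_X_sub_C_mul_left,
    toeplitzForm_X_mul_X_of_natDegree_le hr hr] at h
  have hqq : toeplitzForm s (N + 1) q q = 0 := by
    rw [toeplitzForm_X_sub_C_mul_left, toeplitzForm_X_sub_C_mul_right,
      toeplitzForm_X_sub_C_mul_right, toeplitzForm_X_mul_X_of_natDegree_le hr hr]
    linear_combination (-a) * h - (toeplitzForm s (N + 1) r r
      - starRingEnd ℂ a * toeplitzForm s (N + 1) r (X * r)) * ha
  exact (toeplitzForm_succ_self_pos hpd hq0 hq).ne' hqq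

end Toeplitz

open Toeplitz in
/-- Szegő's lemma: if a hermitian sequence has Toeplitz determinants
`D₀, …, D_{n−1} > 0` and `Dₙ = 0`, then the associated Toeplitz polynomial
`P(z)` (the determinant of the matrix with first row `(1, z, …, zⁿ)` and
rows `(s_{−j}, …, s_{n−j})`, `j = 0, …, n−1`) has `n` roots, all simple and
of modulus `1`. -/
theorem toeplitz_polynomial_roots (n : ℕ) (hn : 0 < n) (s : ℤ → ℂ)
    (hherm : ∀ k : ℤ, s (-k) = starRingEnd ℂ (s k))
    (D : ℕ → ℂ)
    (hD : ∀ k : ℕ, D k = Matrix.det (Matrix.of (fun i j : Fin (k+1) => s ((j:ℤ) - (i:ℤ)))))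
    (hpos : ∀ k : ℕ, k < n → 0 < (D k).re)
    (hzero : D n = 0)
    (P : ℂ → ℂ)
    (hP : ∀ z : ℂ, P z = Matrix.det (Matrix.of (fun i j : Fin (n+1) =>
      if i = 0 then z ^ (j:ℕ) else s ((j:ℤ) - ((i:ℤ) - 1))))) :
    ∃ (α : Fin n → ℂ) (cst : ℂ), cst ≠ 0 ∧ Function.Injective α ∧
      (∀ r : Fin n, ‖α r‖ = 1) ∧
      ∀ z : ℂ, P z = cst * ∏ r : Fin n, (z - α r) := by
  obtain ⟨m, rfl⟩ : ∃ m, n = m + 1 := ⟨n - 1, by omega⟩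
  have hpd : (toeplitzMatrix s m).PosDef :=
    posDef_toeplitzMatrix hherm fun k hk => hD k ▸ hpos k (by omega)
  obtain ⟨p, hp0, hdeg, hker, hPp⟩ :=
    exists_mulVec_eq_zero_and_det_eq_eval (hD (m + 1) ▸ hzero) hpd.det_pos.ne'
  obtain ⟨α, hinj, hroot, heval⟩ := exists_injective_eval_eq_prod hp0
    (natDegree_eq_of_mulVec_eq_zero hpd hker hp0 hdeg)
    (not_sq_dvd_of_mulVec_eq_zero hherm hpd hker hp0 hdeg)
  exact ⟨α, p.leadingCoeff, leadingCoeff_ne_zero.mpr hp0, hinj,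
    fun r => norm_eq_one_of_isRoot hherm hpd hker hp0 hdeg (hroot r),
    fun z => (hP z).trans ((hPp z).trans (heval z))⟩
end
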